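/- Let (Ω, μ) be a probability space, X a nonempty type, E a measurable space, ξ : Ω → E measurable, and f : X → E → ℝ. Fix N ≥ 1 and equip Ω^N (respectively Ω^{N+1}) with the product measure μ^{⊗N} (respectively μ^{⊗(N+1)}). Assume that for every x the function ω ↦ f(x, ξ(ω)) is μ-integrable, that for M ∈ {N, N+1} the function (ω₁,…,ω_M) ↦ ⨅_{x ∈ X} (1/M) ∑_{i=1}^{M} f(x, ξ(ω_i)) is μ^{⊗M}-integrable, and that for almost every sample batch the set { (1/M) ∑_{i=1}^{M} f(x, ξ(ω_i)) : x ∈ X } is bounded below. Then ∫_{Ω^{N+1}} ⨅_{x ∈ X} (1/(N+1)) ∑_{i=1}^{N+1} f(x, ξ(ω_i)) d μ^{⊗(N+1)} ≥ ∫_{Ω^N} ⨅_{x ∈ X} (1/N) ∑_{i=1}^{N} f(x, ξ(ω_i)) d μ^{⊗N}. -/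

import Mathlib

open MeasureTheory Finset

/-!
Given N + 1 samples, each of the N + 1 leave-one-out batches of size N is again an i.i.d. sample of
size N, so its optimal value has expectation E[V̂_N]. Averaging over the left-out index, the mean
of the leave-one-out objectives at a fixed x is the (N + 1)-sample objective at x, and an average
of infima is at most the infimum of the averages. Hence V̂_{N+1} dominates pointwise a quantity of
expectation E[V̂_N].
-/

theorem Fin.sum_sum_succAbove {M : Type*} [AddCommGroup M] {n : ℕ} (a : Fin (n + 1) → M) :
    ∑ j : Fin (n + 1), ∑ i : Fin n, a (j.succAbove i) = n • ∑ k, a k := by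
  have h (j : Fin (n + 1)) : ∑ i : Fin n, a (j.succAbove i) = ∑ k, a k - a j := by
    rw [Fin.sum_univ_succAbove a j]
    abel
  rw [sum_congr rfl fun j _ => h j, sum_sub_distrib, sum_const, succ_nsmul,
    add_sub_cancel_right]

theorem Fin.sum_mean_succAbove {n : ℕ} (hn : n ≠ 0) (a : Fin (n + 1) → ℝ) :
    ∑ j : Fin (n + 1), (1 / (n : ℝ)) * ∑ i : Fin n, a (j.succAbove i) = ∑ k, a k := by
  rw [← mul_sum, Fin.sum_sum_succAbove, nsmul_eq_mul]
  field_simp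

theorem mean_ciInf_succAbove_le {X : Type*} [Nonempty X] {n : ℕ} (hn : n ≠ 0)
    (a : X → Fin (n + 1) → ℝ)
    (hbdd : ∀ j : Fin (n + 1), BddBelow (Set.range fun x => (1 / (n : ℝ)) * ∑ i : Fin n, a x (j.succAbove i))) :
    (1 / ((n : ℝ) + 1)) * ∑ j : Fin (n + 1), ⨅ x, (1 / (n : ℝ)) * ∑ i : Fin n, a x (j.succAbove i)
      ≤ ⨅ x, (1 / ((n : ℝ) + 1)) * ∑ k, a x k :=
  le_ciInf fun x => by
    rw [← Fin.sum_mean_succAbove hn (a x)]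
    gcongr with j
    exact ciInf_le (hbdd j) x

theorem measurePreserving_comp_succAbove {n : ℕ} {α : Fin (n + 1) → Type*}
    [∀ i, MeasurableSpace (α i)] (μ : ∀ i, Measure (α i)) [∀ i, SigmaFinite (μ i)]
    (j : Fin (n + 1)) [IsProbabilityMeasure (μ j)] :
    MeasurePreserving (fun ω i => ω (j.succAbove i)) (Measure.pi μ)
      (Measure.pi fun i => μ (j.succAbove i)) :=
  measurePreserving_snd.comp (measurePreserving_piFinSuccAbove μ j)

section LeaveOneOut

variable {Ω : Type*} [MeasurableSpace Ω] (μ : Measure Ω) [IsProbabilityMeasure μ] {n : ℕ}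
  {F : (Fin n → Ω) → ℝ}

theorem integrable_comp_succAbove (hF : Integrable F (Measure.pi fun _ => μ))
    (j : Fin (n + 1)) :
    Integrable (fun ω : Fin (n + 1) → Ω => F fun i => ω (j.succAbove i))
      (Measure.pi fun _ => μ) :=
  (measurePreserving_comp_succAbove _ j).integrable_comp_of_integrable hF

theorem integral_comp_succAbove (hF : Integrable F (Measure.pi fun _ => μ)) (j : Fin (n + 1)) :
    ∫ ω : Fin (n + 1) → Ω, F (fun i => ω (j.succAbove i)) ∂(Measure.pi fun _ => μ)
      = ∫ ω, F ω ∂(Measure.pi fun _ => μ) := by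
  have hmp := measurePreserving_comp_succAbove (fun _ => μ) j
  rw [← hmp.map_eq, integral_map hmp.measurable.aemeasurable (hmp.map_eq ▸ hF.1)]

theorem integrable_mean_comp_succAbove (hF : Integrable F (Measure.pi fun _ => μ)) :
    Integrable (fun ω : Fin (n + 1) → Ω =>
        (1 / ((n : ℝ) + 1)) * ∑ j : Fin (n + 1), F fun i => ω (j.succAbove i))
      (Measure.pi fun _ => μ) :=
  (integrable_finsetSum _ fun j _ => integrable_comp_succAbove μ hF j).const_mul _

theorem integral_mean_comp_succAbove (hF : Integrable F (Measure.pi fun _ => μ)) :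
    ∫ ω : Fin (n + 1) → Ω, (1 / ((n : ℝ) + 1)) * ∑ j : Fin (n + 1), F (fun i => ω (j.succAbove i))
        ∂(Measure.pi fun _ => μ)
      = ∫ ω, F ω ∂(Measure.pi fun _ => μ) := by
  rw [integral_const_mul, integral_finsetSum _ fun j _ => integrable_comp_succAbove μ hF j]
  simp_rw [integral_comp_succAbove μ hF, sum_const, card_univ, Fintype.card_fin, nsmul_eq_mul]
  push_cast
  field_simp

end LeaveOneOut

theorem saa_expected_value_mono_general
    {Ω : Type*} [MeasurableSpace Ω] (μ : Measure Ω) [IsProbabilityMeasure μ]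
    {X : Type*} [Nonempty X] {E : Type*} [MeasurableSpace E]
    (ξ : Ω → E) (f : X → E → ℝ)
    (N : ℕ) (hN : 1 ≤ N)
    (hinfN : Integrable
      (fun ω : Fin N → Ω => ⨅ x : X, (1 / (N : ℝ)) * ∑ i : Fin N, f x (ξ (ω i)))
      (Measure.pi fun _ : Fin N => μ))
    (hinfN1 : Integrable
      (fun ω : Fin (N + 1) → Ω =>
        ⨅ x : X, (1 / ((N : ℝ) + 1)) * ∑ i : Fin (N + 1), f x (ξ (ω i)))
      (Measure.pi fun _ : Fin (N + 1) => μ))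
    (hbddN : ∀ᵐ ω ∂(Measure.pi fun _ : Fin N => μ),
      BddBelow (Set.range fun x : X => (1 / (N : ℝ)) * ∑ i : Fin N, f x (ξ (ω i)))) :
    ∫ ω : Fin (N + 1) → Ω,
        (⨅ x : X, (1 / ((N : ℝ) + 1)) * ∑ i : Fin (N + 1), f x (ξ (ω i)))
        ∂(Measure.pi fun _ : Fin (N + 1) => μ)
      ≥ ∫ ω : Fin N → Ω,
          (⨅ x : X, (1 / (N : ℝ)) * ∑ i : Fin N, f x (ξ (ω i)))
          ∂(Measure.pi fun _ : Fin N => μ) := by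
  have hbdd : ∀ᵐ ω ∂(Measure.pi fun _ : Fin (N + 1) => μ), ∀ j : Fin (N + 1),
      BddBelow (Set.range fun x : X =>
        (1 / (N : ℝ)) * ∑ i : Fin N, f x (ξ (ω (j.succAbove i)))) :=
    ae_all_iff.2 fun j =>
      (measurePreserving_comp_succAbove (fun _ => μ) j).quasiMeasurePreserving.ae hbddN
  have hle := hbdd.mono fun ω hω =>
    mean_ciInf_succAbove_le (by omega) (fun x k => f x (ξ (ω k))) hω
  rw [ge_iff_le, ← integral_mean_comp_succAbove μ hinfN]
  exact integral_mono_ae (integrable_mean_comp_succAbove μ hinfN) hinfN1 hle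

/-- Monotonicity of the SAA lower bound: the expected optimal value of the
sampled problem is nondecreasing in the sample size N. -/
theorem saa_expected_value_mono
    {Ω : Type*} [MeasurableSpace Ω] (μ : Measure Ω) [IsProbabilityMeasure μ]
    {X : Type*} [Nonempty X] {E : Type*} [MeasurableSpace E]
    (ξ : Ω → E) (hξ : Measurable ξ) (f : X → E → ℝ)
    (N : ℕ) (hN : 1 ≤ N)
    (hint : ∀ x : X, Integrable (fun ω => f x (ξ ω)) μ)
    (hinfN : Integrable
      (fun ω : Fin N → Ω => ⨅ x : X, (1 / (N : ℝ)) * ∑ i : Fin N, f x (ξ (ω i)))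
      (Measure.pi fun _ : Fin N => μ))
    (hinfN1 : Integrable
      (fun ω : Fin (N + 1) → Ω =>
        ⨅ x : X, (1 / ((N : ℝ) + 1)) * ∑ i : Fin (N + 1), f x (ξ (ω i)))
      (Measure.pi fun _ : Fin (N + 1) => μ))
    (hbddN : ∀ᵐ ω ∂(Measure.pi fun _ : Fin N => μ),
      BddBelow (Set.range fun x : X => (1 / (N : ℝ)) * ∑ i : Fin N, f x (ξ (ω i))))
    (hbddN1 : ∀ᵐ ω ∂(Measure.pi fun _ : Fin (N + 1) => μ),
      BddBelow (Set.range fun x : X =>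
        (1 / ((N : ℝ) + 1)) * ∑ i : Fin (N + 1), f x (ξ (ω i)))) :
    ∫ ω : Fin (N + 1) → Ω,
        (⨅ x : X, (1 / ((N : ℝ) + 1)) * ∑ i : Fin (N + 1), f x (ξ (ω i)))
        ∂(Measure.pi fun _ : Fin (N + 1) => μ)
      ≥ ∫ ω : Fin N → Ω,
          (⨅ x : X, (1 / (N : ℝ)) * ∑ i : Fin N, f x (ξ (ω i)))
          ∂(Measure.pi fun _ : Fin N => μ) :=
  saa_expected_value_mono_general μ ξ f N hN hinfN hinfN1 hbddN
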